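/- arXiv:1111.6444 — 5 statements merged into one kernel-verified Lean document; each statement's English description precedes it below -/
import Mathlib

section
/- Let A ⊆ 2^ω be upward closed (u ∈ A and u ⊆ v implies v ∈ A). Then A is meager if and only if there exist successive finite subsets I_0 < I_1 < I_2 < ⋯ of ω such that every u ∈ A satisfies: {n : u ∩ I_n = ∅} is finite. -/
/-!
If `A` is meagre, pick decreasing dense open sets `G n` whose intersection misses `A`. Since
only finitely many prefixes of length `b` exist, a single pattern on a block `[b, c)` forces a
point into a dense open set whatever it looks like below `b`; stacking such blocks gives
`I n = [a n, a (n + 1))` forcing into `G n`. If some `u ∈ A` missed infinitely many blocks, raising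
`u` to the forcing pattern on those blocks gives a point of `A` (upward closure) lying in
infinitely many, hence all, of the `G n`.

Conversely, the points meeting every `I n` with `n ≥ k` form a closed nowhere dense set, and these
sets cover `A`.
-/

open Set PiNat

section Meagre

variable {X : Type*} [TopologicalSpace X]

theorem dense_biInter_finset_of_isOpen {ι : Type*} {s : Finset ι} {f : ι → Set X}
    (ho : ∀ i ∈ s, IsOpen (f i)) (hd : ∀ i ∈ s, Dense (f i)) : Dense (⋂ i ∈ s, f i) := by
  classical
  induction s using Finset.induction_on with
  | empty => simp
  | insert a s _ ih =>
    simp only [Finset.mem_insert, forall_eq_or_imp] at ho hd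
    rw [Finset.set_biInter_insert]
    exact hd.1.inter_of_isOpen_left (ih ho.2 hd.2) ho.1

theorem IsMeagre.exists_antitone_isOpen_dense {s : Set X} (hs : IsMeagre s) :
    ∃ G : ℕ → Set X, Antitone G ∧ (∀ n, IsOpen (G n)) ∧ (∀ n, Dense (G n)) ∧
      ∀ x ∈ s, ∃ n, x ∉ G n := by
  obtain ⟨S, hSo, hSd, hSc, hSs⟩ := mem_residual_iff.mp hs
  obtain ⟨g, hg⟩ := (hSc.insert univ).exists_eq_range (insert_nonempty _ _)
  have hgS (i : ℕ) : g i = univ ∨ g i ∈ S := by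
    rw [← mem_insert_iff, hg]; exact mem_range_self i
  have hgo (i : ℕ) : IsOpen (g i) := (hgS i).elim (· ▸ isOpen_univ) (hSo _)
  have hgd (i : ℕ) : Dense (g i) := (hgS i).elim (· ▸ dense_univ) (hSd _)
  refine ⟨fun n => ⋂ i ∈ Finset.range (n + 1), g i, fun m n hmn => ?_,
    fun n => isOpen_biInter_finset fun i _ => hgo i,
    fun n => dense_biInter_finset_of_isOpen (fun i _ => hgo i) fun i _ => hgd i, fun x hx => ?_⟩
  · exact biInter_subset_biInter_left (by simpa using hmn)
  · obtain ⟨t, htS, hxt⟩ : ∃ t ∈ S, x ∉ t := by simpa using fun h => hSs h hx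
    obtain ⟨i, rfl⟩ : t ∈ range g := hg ▸ mem_insert_of_mem _ htS
    exact ⟨i, fun h => hxt (mem_iInter₂.mp h i (by simp))⟩

end Meagre

section Forcing

variable {α : Type*} [TopologicalSpace α] [DiscreteTopology α] {G : Set (ℕ → α)}

theorem IsOpen.exists_cylinder_subset (hG : IsOpen G) {x : ℕ → α} (hx : x ∈ G) :
    ∃ n, cylinder x n ⊆ G := by
  obtain ⟨_, ⟨y, n, rfl⟩, hxy, hyG⟩ :=
    (isTopologicalBasis_cylinders fun _ => α).exists_subset_of_mem_open hx hG
  exact ⟨n, mem_cylinder_iff_eq.mp hxy ▸ hyG⟩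

theorem Dense.exists_cylinder_subset (hd : Dense G) (ho : IsOpen G) (x : ℕ → α) (b : ℕ) :
    ∃ y ∈ cylinder x b, ∃ n, b ≤ n ∧ cylinder y n ⊆ G := by
  obtain ⟨y, hyx, hyG⟩ :=
    hd.inter_open_nonempty _ (isOpen_cylinder _ x b) ⟨x, self_mem_cylinder x b⟩
  obtain ⟨n, hn⟩ := ho.exists_cylinder_subset hyG
  exact ⟨y, hyx, max n b, le_max_right n b, (cylinder_anti y (le_max_left n b)).trans hn⟩

theorem Dense.exists_forall_eqOn_Ico_mem [Finite α] [Nonempty α] (hd : Dense G) (ho : IsOpen G)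
    (b : ℕ) : ∃ c, b < c ∧ ∃ τ : ℕ → α, ∀ u, EqOn u τ (Ico b c) → u ∈ G := by
  classical
  have : Fintype (Fin b → α) := Fintype.ofFinite _
  suffices h : ∀ P : Finset (Fin b → α), ∃ c, b < c ∧ ∃ τ : ℕ → α,
      ∀ p ∈ P, ∀ u : ℕ → α, (∀ i : Fin b, u i = p i) → EqOn u τ (Ico b c) → u ∈ G by
    obtain ⟨c, hbc, τ, hτ⟩ := h Finset.univ
    exact ⟨c, hbc, τ, fun u => hτ (fun i => u i) (Finset.mem_univ _) u fun _ => rfl⟩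
  intro P
  induction P using Finset.induction_on with
  | empty => exact ⟨b + 1, b.lt_succ_self, fun _ => Classical.arbitrary α, by simp⟩
  | insert p P _ ih =>
    obtain ⟨c, hbc, τ, hτ⟩ := ih
    -- extend the pattern `τ` on `[b, c)` so that it also forces `G` above the prefix `p`
    let z : ℕ → α := fun i => if h : i < b then p ⟨i, h⟩ else τ i
    obtain ⟨y, hyz, N, hcN, hyG⟩ := hd.exists_cylinder_subset ho z c
    refine ⟨N, hbc.trans_le hcN, y, fun q hq u hu huy => ?_⟩
    rcases Finset.mem_insert.mp hq with rfl | hq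
    · refine hyG fun i hi => ?_
      by_cases hib : i < b
      · rw [hyz i (hib.trans hbc), hu ⟨i, hib⟩]; simp [z, hib]
      · exact huy ⟨not_lt.mp hib, hi⟩
    · refine hτ q hq u hu fun i hi => ?_
      rw [huy ⟨hi.1, hi.2.trans_le hcN⟩, hyz i hi.2]; simp [z, not_lt.mpr hi.1]

theorem exists_strictMono_forall_eqOn_Ico_mem [Finite α] [Nonempty α] {G : ℕ → Set (ℕ → α)}
    (hd : ∀ n, Dense (G n)) (ho : ∀ n, IsOpen (G n)) :
    ∃ a : ℕ → ℕ, StrictMono a ∧ ∃ τ : ℕ → ℕ → α,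
      ∀ n u, EqOn u (τ n) (Ico (a n) (a (n + 1))) → u ∈ G n := by
  choose c hc τ hτ using fun n => (hd n).exists_forall_eqOn_Ico_mem (ho n)
  let a : ℕ → ℕ := fun n => Nat.rec 0 (fun k ak => c k ak) n
  exact ⟨a, strictMono_nat_of_lt_succ fun n => hc n (a n), fun n => τ n (a n),
    fun n => hτ n (a n)⟩

end Forcing

theorem exists_eqOn_of_pairwiseDisjoint {ι γ β : Type*} {S : Set ι} {B : ι → Set γ}
    (hB : S.PairwiseDisjoint B) (τ : ι → γ → β) (u : γ → β) :
    ∃ y : γ → β, (∀ n ∈ S, EqOn y (τ n) (B n)) ∧ ∀ m, (∀ n ∈ S, m ∉ B n) → y m = u m := by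
  classical
  refine ⟨fun m => if h : ∃ n ∈ S, m ∈ B n then τ h.choose m else u m, fun n hn m hm => ?_,
    fun m hm => dif_neg fun ⟨n, hn, hmn⟩ => hm n hn hmn⟩
  have h : ∃ n ∈ S, m ∈ B n := ⟨n, hn, hm⟩
  simp only [dif_pos h, hB.elim_set h.choose_spec.1 hn m h.choose_spec.2 hm]

theorem finite_setOf_forall_Ico_eq_false {A : Set (ℕ → Bool)}
    (hup : ∀ u v : ℕ → Bool, u ∈ A → (∀ n, u n = true → v n = true) → v ∈ A)
    {G : ℕ → Set (ℕ → Bool)} (hG : Antitone G) (hAG : ∀ u ∈ A, ∃ n, u ∉ G n)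
    {a : ℕ → ℕ} (ha : StrictMono a) {τ : ℕ → ℕ → Bool}
    (hτ : ∀ n u, EqOn u (τ n) (Ico (a n) (a (n + 1))) → u ∈ G n) {u : ℕ → Bool} (hu : u ∈ A) :
    {n | ∀ m ∈ Ico (a n) (a (n + 1)), u m = false}.Finite := by
  by_contra hS
  set S := {n | ∀ m ∈ Ico (a n) (a (n + 1)), u m = false}
  obtain ⟨y, hyτ, hyu⟩ :=
    exists_eqOn_of_pairwiseDisjoint (ha.monotone.pairwise_disjoint_on_Ico_succ.set_pairwise S) τ u
  have huy (m : ℕ) (hm : u m = true) : y m = true := by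
    rw [hyu m fun n hn hmn => by simp [hn m hmn] at hm, hm]
  obtain ⟨k, hk⟩ := hAG y (hup u y hu huy)
  obtain ⟨n, hnS, hkn⟩ := (Set.not_finite.mp hS).exists_gt k
  exact hk (hG hkn.le (hτ n y (hyτ n hnS)))

theorem isClosed_setOf_forall_le_exists_eq_true (I : ℕ → Finset ℕ) (k : ℕ) :
    IsClosed {u : ℕ → Bool | ∀ n, k ≤ n → ∃ m ∈ I n, u m = true} := by
  have hunion (n : ℕ) :
      {u : ℕ → Bool | ∃ m ∈ I n, u m = true} = ⋃ m ∈ I n, {u | u m = true} := by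
    ext; simp
  simp only [ofPred_forall, hunion]
  exact isClosed_iInter fun n => isClosed_iInter fun _ => (I n).finite_toSet.isClosed_biUnion
    fun m _ => isClosed_eq (continuous_apply m) continuous_const

theorem isNowhereDense_setOf_forall_le_exists_eq_true {I : ℕ → Finset ℕ}
    (hI : ∀ n, ∀ m ∈ I n, n ≤ m) (k : ℕ) :
    IsNowhereDense {u : ℕ → Bool | ∀ n, k ≤ n → ∃ m ∈ I n, u m = true} := by
  rw [(isClosed_setOf_forall_le_exists_eq_true I k).isNowhereDense_iff, eq_empty_iff_forall_notMem]
  intro u hu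
  obtain ⟨N, hN⟩ := isOpen_interior.exists_cylinder_subset hu
  have hv : (fun i => decide (i < N) && u i) ∈ cylinder u N := fun i hi => by simp [hi]
  obtain ⟨m, hm, hvm⟩ := interior_subset (hN hv) (max k N) (le_max_left k N)
  simp only [Bool.and_eq_true, decide_eq_true_eq] at hvm
  exact (hvm.1.trans_le ((le_max_right k N).trans (hI _ m hm))).false

theorem isMeagre_of_finite_setOf_forall_eq_false {I : ℕ → Finset ℕ} (hI : ∀ n, ∀ m ∈ I n, n ≤ m)
    {A : Set (ℕ → Bool)} (hA : ∀ u ∈ A, {n | ∀ m ∈ I n, u m = false}.Finite) : IsMeagre A := by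
  refine (isMeagre_iUnion fun k =>
    (isNowhereDense_setOf_forall_le_exists_eq_true hI k).isMeagre).mono fun u hu => ?_
  obtain ⟨k, hk⟩ := (hA u hu).bddAbove
  refine mem_iUnion.mpr ⟨k + 1, fun n hn => ?_⟩
  by_contra! h
  have : n ≤ k := hk (by simpa using h)
  omega

theorem le_of_mem_of_forall_lt_of_mem_succ {I : ℕ → Finset ℕ} (hne : ∀ n, (I n).Nonempty)
    (hsucc : ∀ n, ∀ i ∈ I n, ∀ j ∈ I (n + 1), i < j) : ∀ n, ∀ m ∈ I n, n ≤ m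
  | 0, _, _ => Nat.zero_le _
  | n + 1, m, hm =>
    have ⟨i, hi⟩ := hne n
    (le_of_mem_of_forall_lt_of_mem_succ hne hsucc n i hi).trans_lt (hsucc n i hi m hm)

/-- An upward closed subset `A` of Cantor space is meager iff there exist successive
finite sets `I n` such that every `u ∈ A` meets all but finitely many of the `I n`. -/
theorem stmt_8 (A : Set (ℕ → Bool))
    (hup : ∀ u v : ℕ → Bool, u ∈ A → (∀ n, u n = true → v n = true) → v ∈ A) :
    IsMeagre A ↔
      ∃ I : ℕ → Finset ℕ,
        (∀ n, (I n).Nonempty) ∧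
        (∀ n, ∀ i ∈ I n, ∀ j ∈ I (n + 1), i < j) ∧
        ∀ u ∈ A, {n : ℕ | ∀ m ∈ I n, u m = false}.Finite := by
  constructor
  · intro hA
    obtain ⟨G, hG, hGo, hGd, hAG⟩ := hA.exists_antitone_isOpen_dense
    obtain ⟨a, ha, τ, hτ⟩ := exists_strictMono_forall_eqOn_Ico_mem hGd hGo
    refine ⟨fun n => Finset.Ico (a n) (a (n + 1)),
      fun n => Finset.nonempty_Ico.mpr (ha n.lt_succ_self), fun n i hi j hj => ?_, fun u hu => ?_⟩
    · simp only [Finset.mem_Ico] at hi hj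
      omega
    · simpa only [Finset.mem_Ico, mem_Ico] using
        finite_setOf_forall_Ico_eq_false hup hG hAG ha hτ hu
  · rintro ⟨I, hne, hsucc, hA⟩
    exact isMeagre_of_finite_setOf_forall_eq_false (le_of_mem_of_forall_lt_of_mem_succ hne hsucc) hA
end

section
/- Let A ⊆ 2^ω be upward closed (u ∈ A and u ⊆ v implies v ∈ A). Then A is comeager if and only if there exist successive finite subsets I_0 < I_1 < I_2 < ⋯ of ω such that every u ∈ 2^ω containing infinitely many of the sets I_n belongs to A. -/
/-!
A comeager set contains `⋂ₙ Dₙ` for a decreasing sequence of dense open sets. For an open dense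
`D` and every `m`, some finite pattern on an interval `[m, N)` forces membership in `D`,
whatever the coordinates below `m` are; iterating gives intervals `Iₙ` and a point `x` such that
agreeing with `x` on infinitely many `Iₙ` forces membership in every `Dₙ`. If `u` contains
infinitely many `Iₙ`, then `u` lies above the point that equals `x` on those intervals and `0`
elsewhere, so `u ∈ A` by upward closure. Conversely, the points containing infinitely many of the
successive sets `Iₙ` form a dense `G_δ`.
-/

open Set Filter PiNat Function

theorem Function.Involutive.isOpenMap {X : Type*} [TopologicalSpace X] {f : X → X}
    (hf : Involutive f) (hc : Continuous f) : IsOpenMap f := fun U hU => by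
  rw [hf.image_eq_preimage_symm]
  exact hU.preimage hc

theorem exists_antitone_isOpen_dense_iInter_subset {X : Type*} [TopologicalSpace X]
    [BaireSpace X] {A : Set X} (hA : A ∈ residual X) :
    ∃ D : ℕ → Set X, Antitone D ∧ (∀ n, IsOpen (D n)) ∧ (∀ n, Dense (D n)) ∧ ⋂ n, D n ⊆ A := by
  obtain ⟨G, hGA, hG, hGd⟩ := mem_residual.1 hA
  obtain ⟨f, hfo, rfl⟩ := isGδ_iff_eq_iInter_nat.1 hG
  refine ⟨fun n => ⋂ k ∈ Iic n, f k,
    fun a b hab => biInter_subset_biInter_left (Iic_subset_Iic.2 hab),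
    fun n => (finite_Iic n).isOpen_biInter fun k _ => hfo k,
    fun n => hGd.mono (subset_iInter₂ fun k _ => iInter_subset f k), ?_⟩
  exact fun x hx =>
    hGA (mem_iInter.2 fun n => mem_iInter₂.1 (mem_iInter.1 hx n) n (mem_Iic.2 le_rfl))

theorem StrictMono.exists_eqOn_Ico {α : Type*} {m : ℕ → ℕ} (hm : StrictMono m)
    (y : ℕ → ℕ → α) : ∃ x : ℕ → α, ∀ n, EqOn x (y n) (Ico (m n) (m (n + 1))) := by
  classical
  have hex : ∀ i, ∃ n, i < m (n + 1) :=
    fun i => ⟨i, (hm.id_le (i + 1)).trans_lt' i.lt_succ_self⟩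
  refine ⟨fun i => y (Nat.find (hex i)) i, fun n i hi => ?_⟩
  have : Nat.find (hex i) = n :=
    (Nat.find_eq_iff _).2 ⟨hi.2, fun k hk => not_lt.2 ((hm.monotone hk).trans hi.1)⟩
  simp only [this]

theorem forall_mem_ge_of_successive {I : ℕ → Finset ℕ} (hne : ∀ n, (I n).Nonempty)
    (hlt : ∀ n, ∀ i ∈ I n, ∀ j ∈ I (n + 1), i < j) (n : ℕ) : ∀ i ∈ I n, n ≤ i := by
  induction n with
  | zero => exact fun i _ => i.zero_le
  | succ n ih =>
    obtain ⟨j, hj⟩ := hne n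
    exact fun i hi => (ih j hj).trans_lt (hlt n j hj i hi)

namespace CantorSpace

def flipAt (m : ℕ) (w : ℕ → Bool) : ℕ → Bool :=
  update w m (!w m)

theorem flipAt_involutive (m : ℕ) : Involutive (flipAt m) := fun w => by
  simp [flipAt]

theorem continuous_flipAt (m : ℕ) : Continuous (flipAt m) :=
  continuous_id.update m ((continuous_of_discreteTopology (f := not)).comp (continuous_apply m))

theorem eqOn_Ico_of_eqOn_Ico_succ {w t : ℕ → Bool} {m N : ℕ} (h : EqOn w t (Ico (m + 1) N))
    (hm : w m = t m) : EqOn w t (Ico m N) := fun i hi => by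
  rcases hi.1.eq_or_lt with rfl | hlt
  · exact hm
  · exact h ⟨hlt, hi.2⟩

theorem exists_eqOn_Ico_subset {D : Set (ℕ → Bool)} (hD : IsOpen D) (hd : Dense D) (m : ℕ) :
    ∃ N t, {w | EqOn w t (Ico m N)} ⊆ D := by
  induction m generalizing D with
  | zero =>
    obtain ⟨t, ht⟩ := hd.nonempty
    obtain ⟨_, ⟨x, N, rfl⟩, htx, hsub⟩ :=
      (isTopologicalBasis_cylinders fun _ => Bool).exists_subset_of_mem_open ht hD
    exact ⟨N, t, fun w hw => hsub fun i hi => (hw ⟨i.zero_le, hi⟩).trans (htx i hi)⟩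
  | succ m ih =>
    -- Forcing `D ∩ flipAt m ⁻¹' D` from `m` on forces `D` from `m + 1` on: whatever `w m` is,
    -- `w` or `flipAt m w` matches the pattern at `m`.
    have hflip := (flipAt_involutive m).isOpenMap (continuous_flipAt m)
    obtain ⟨N, t, ht⟩ := ih (hD.inter (hD.preimage (continuous_flipAt m)))
      (hd.inter_of_isOpen_left (hd.preimage hflip) hD)
    refine ⟨N, t, fun w hw => ?_⟩
    by_cases hwm : w m = t m
    · exact (ht (eqOn_Ico_of_eqOn_Ico_succ hw hwm)).1
    · have hfw : EqOn (flipAt m w) t (Ico (m + 1) N) := fun i hi => by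
        rw [flipAt, update_of_ne (by grind)]
        exact hw hi
      have hfm : flipAt m w m = t m := by cases h : w m <;> simp_all [flipAt]
      have := (ht (eqOn_Ico_of_eqOn_Ico_succ hfw hfm)).2
      rwa [mem_preimage, flipAt_involutive m w] at this

theorem exists_lt_eqOn_Ico_subset {D : Set (ℕ → Bool)} (hD : IsOpen D) (hd : Dense D) (m : ℕ) :
    ∃ N, m < N ∧ ∃ t, {w | EqOn w t (Ico m N)} ⊆ D := by
  obtain ⟨N, t, ht⟩ := exists_eqOn_Ico_subset hD hd m
  exact ⟨max N (m + 1), by omega, t,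
    fun w hw => ht (hw.mono (Ico_subset_Ico_right (le_max_left _ _)))⟩

theorem exists_strictMono_infinite_eqOn_Ico_imp_mem {A : Set (ℕ → Bool)}
    (hA : A ∈ residual (ℕ → Bool)) :
    ∃ m : ℕ → ℕ, StrictMono m ∧ ∃ x : ℕ → Bool,
      ∀ v, {n | EqOn v x (Ico (m n) (m (n + 1)))}.Infinite → v ∈ A := by
  obtain ⟨D, hanti, hDo, hDd, hDA⟩ := exists_antitone_isOpen_dense_iInter_subset hA
  choose N hN t ht using fun n => exists_lt_eqOn_Ico_subset (hDo n) (hDd n)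
  let m : ℕ → ℕ := fun n => Nat.rec 0 (fun n k => N n k) n
  have hm : StrictMono m := strictMono_nat_of_lt_succ fun n => hN n (m n)
  obtain ⟨x, hx⟩ := hm.exists_eqOn_Ico fun n => t n (m n)
  refine ⟨m, hm, x, fun v hv => hDA (mem_iInter.2 fun k => ?_)⟩
  obtain ⟨n, hn, hkn⟩ := hv.exists_gt k
  exact hanti hkn.le (ht n (m n) (hn.trans (hx n)))

theorem isOpen_setOf_forall_mem_eq (s : Finset ℕ) (b : Bool) :
    IsOpen {u : ℕ → Bool | ∀ i ∈ s, u i = b} := by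
  simp only [ofPred_forall]
  exact isOpen_biInter_finset fun i _ =>
    (continuous_apply (A := fun _ : ℕ => Bool) i).isOpen_preimage {b} (isOpen_discrete _)

theorem residual_setOf_infinite_forall_mem_eq {I : ℕ → Finset ℕ}
    (hI : ∀ K, ∀ᶠ n in atTop, ∀ i ∈ I n, K ≤ i) (b : Bool) :
    {u : ℕ → Bool | {n | ∀ i ∈ I n, u i = b}.Infinite} ∈ residual (ℕ → Bool) := by
  have hdense : ∀ N, Dense (⋃ n ≥ N, {u : ℕ → Bool | ∀ i ∈ I n, u i = b}) := by
    intro N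
    refine (isTopologicalBasis_cylinders fun _ => Bool).dense_iff.2 ?_
    rintro _ ⟨x, K, rfl⟩ -
    obtain ⟨n, hKn, hNn⟩ := ((hI K).and (eventually_ge_atTop N)).exists
    classical
    refine ⟨fun i => if i ∈ I n then b else x i, fun i hi => ?_,
      mem_biUnion hNn fun i hi => ?_⟩
    · simp only [if_neg fun h => (hKn i h).not_gt hi]
    · simp only [if_pos hi]
  refine mem_of_superset (countable_iInter_mem.2 fun N => residual_of_dense_open
    (isOpen_biUnion fun n _ => isOpen_setOf_forall_mem_eq (I n) b) (hdense N)) fun u hu => ?_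
  refine infinite_of_forall_exists_gt fun N => ?_
  obtain ⟨n, hn, hun⟩ := mem_iUnion₂.1 (mem_iInter.1 hu (N + 1))
  exact ⟨n, hun, hn⟩

theorem mem_of_infinite_forall_mem_eq_true {A : Set (ℕ → Bool)}
    (hup : ∀ u v : ℕ → Bool, u ∈ A → (∀ n, u n = true → v n = true) → v ∈ A)
    {I : ℕ → Set ℕ} {x : ℕ → Bool} (hx : ∀ v, {n | EqOn v x (I n)}.Infinite → v ∈ A)
    {u : ℕ → Bool} (hu : {n | ∀ i ∈ I n, u i = true}.Infinite) : u ∈ A := by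
  classical
  let v : ℕ → Bool := fun i => decide (∃ n, i ∈ I n ∧ ∀ j ∈ I n, u j = true) && x i
  refine hup v u (hx v (hu.mono fun n hn i hi => ?_)) fun i hi => ?_
  · have hin : ∃ n, i ∈ I n ∧ ∀ j ∈ I n, u j = true := ⟨n, hi, hn⟩
    simp only [v, hin, decide_true, Bool.true_and]
  · obtain ⟨⟨n, hin, hn⟩, -⟩ : (∃ n, i ∈ I n ∧ ∀ j ∈ I n, u j = true) ∧ x i = true := by
      simpa [v] using hi
    exact hn i hin

end CantorSpace

open CantorSpace

/-- An upward closed subset `A` of Cantor space is comeager iff there exist successive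
finite sets `I n` such that every `u` containing infinitely many `I n` belongs to `A`. -/
theorem stmt_9 (A : Set (ℕ → Bool))
    (hup : ∀ u v : ℕ → Bool, u ∈ A → (∀ n, u n = true → v n = true) → v ∈ A) :
    IsMeagre Aᶜ ↔
      ∃ I : ℕ → Finset ℕ,
        (∀ n, (I n).Nonempty) ∧
        (∀ n, ∀ i ∈ I n, ∀ j ∈ I (n + 1), i < j) ∧
        ∀ u : ℕ → Bool, {n : ℕ | ∀ m ∈ I n, u m = true}.Infinite → u ∈ A := by
  rw [IsMeagre, compl_compl]
  constructor
  · intro hA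
    obtain ⟨m, hm, x, hx⟩ := exists_strictMono_infinite_eqOn_Ico_imp_mem hA
    refine ⟨fun n => Finset.Ico (m n) (m (n + 1)),
      fun n => Finset.nonempty_Ico.2 (hm n.lt_succ_self), fun n i hi j hj => ?_, fun u hu => ?_⟩
    · exact (Finset.mem_Ico.1 hi).2.trans_le (Finset.mem_Ico.1 hj).1
    · exact mem_of_infinite_forall_mem_eq_true hup hx (by simpa using hu)
  · rintro ⟨I, hne, hlt, hA⟩
    have hI : ∀ K, ∀ᶠ n in atTop, ∀ i ∈ I n, K ≤ i := fun K =>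
      (eventually_ge_atTop K).mono fun n hn i hi =>
        hn.trans (forall_mem_ge_of_successive hne hlt n i hi)
    exact mem_of_superset (residual_setOf_infinite_forall_mem_eq hI true) hA
end

section
/- Let φ : X → Y be a continuous map between topological spaces such that for every nonempty (basic) open set U ⊆ X, the closure of φ(U) is open in Y. Then for every nowhere dense set A ⊆ Y, the preimage φ^{-1}(A) is nowhere dense in X. -/
/-!
If `interior (closure (φ ⁻¹' A))` contained a point, it would contain a basic open `U` around it.
By continuity `φ '' U ⊆ closure A`, so the open set `closure (φ '' U)` lies in `closure A`, whose
interior is empty; but it contains the image of that point.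
-/

lemma IsNowhereDense.eq_empty_of_isOpen_of_subset_closure {Y : Type*} [TopologicalSpace Y]
    {A V : Set Y} (hA : IsNowhereDense A) (hV : IsOpen V) (hVA : V ⊆ closure A) : V = ∅ :=
  Set.subset_eq_empty (interior_maximal hVA hV) hA

lemma Continuous.closure_image_subset_of_subset_closure_preimage {X Y : Type*}
    [TopologicalSpace X] [TopologicalSpace Y] {φ : X → Y} (hφ : Continuous φ) {A : Set Y}
    {U : Set X} (hU : U ⊆ closure (φ ⁻¹' A)) : closure (φ '' U) ⊆ closure A :=
  closure_minimal
    (Set.image_subset_iff.mpr (hU.trans (hφ.closure_preimage_subset A))) isClosed_closure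

/-- If `φ` is continuous and there is a basis of open sets `U` with `closure (φ '' U)`
open, then preimages of nowhere dense sets are nowhere dense. -/
theorem stmt_11 {X Y : Type*} [TopologicalSpace X] [TopologicalSpace Y]
    (φ : X → Y) (hφ : Continuous φ) (B : Set (Set X))
    (hB : TopologicalSpace.IsTopologicalBasis B)
    (hopen : ∀ U ∈ B, IsOpen (closure (φ '' U)))
    (A : Set Y) (hA : IsNowhereDense A) :
    IsNowhereDense (φ ⁻¹' A) := by
  refine Set.eq_empty_iff_forall_notMem.mpr fun x hx => ?_
  obtain ⟨U, hUB, hxU, hU⟩ := hB.exists_subset_of_mem_open hx isOpen_interior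
  have hφU : closure (φ '' U) = ∅ :=
    hA.eq_empty_of_isOpen_of_subset_closure (hopen U hUB)
      (hφ.closure_image_subset_of_subset_closure_preimage (hU.trans interior_subset))
  exact hφU.subset (subset_closure (Set.mem_image_of_mem φ hxU))
end

section
/- Every subset of Cantor space 2^ω with the Baire property that is invariant under all finitely supported permutations of ω (acting on subsets of ω by taking images) is either meager or comeager. -/
/-!
Replace `A` by an open set `U` with `A =ᵇ U`. If `U` is empty, `A` is meagre. Otherwise `U`
contains a cylinder `[v ↾ n]`, so `[v ↾ n] \ A` is meagre. Swapping the block `[0, n)` with a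
block `[t, t + n)`, `t ≥ n`, is a finitely supported permutation, so by invariance each shifted
cylinder `{u | ∀ i < n, u (t + i) = v i}` is also contained in `A` up to a meagre set. These
shifted cylinders cover a dense open set, hence `Aᶜ` is meagre.
-/

open Set Filter Topology PiNat

section Meagre

variable {X : Type*} [TopologicalSpace X]

lemma isMeagre_diff_iff {s t : Set X} : IsMeagre (s \ t) ↔ s ≤ᶠ[residual X] t := by
  have : (s \ t)ᶜ = {x | x ∈ s → x ∈ t} := by ext; simp [imp_iff_not_or]
  rw [IsMeagre, this]
  rfl

lemma isMeagre_compl_of_forall_isMeagre_diff {ι : Type*} [Countable ι] {A : Set X}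
    {C : ι → Set X} (hCo : IsOpen (⋃ i, C i)) (hCd : Dense (⋃ i, C i))
    (hA : ∀ i, IsMeagre (C i \ A)) :
    IsMeagre Aᶜ := by
  have hC : IsMeagre (⋃ i, C i)ᶜ := by
    rw [IsMeagre, compl_compl]
    exact residual_of_dense_open hCo hCd
  refine ((isMeagre_iUnion hA).union hC).mono fun u hu => ?_
  by_cases h : u ∈ ⋃ i, C i
  · obtain ⟨i, hi⟩ := mem_iUnion.1 h
    exact Or.inl (mem_iUnion.2 ⟨i, hi, hu⟩)
  · exact Or.inr h

end Meagre

section Sequences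

variable {α : Type*} [TopologicalSpace α]

lemma isMeagre_preimage_perm_diff {A S : Set (ℕ → α)} (σ : Equiv.Perm ℕ)
    (hA : ∀ u : ℕ → α, u ∈ A ↔ (fun n => u (σ.symm n)) ∈ A) (hS : IsMeagre (S \ A)) :
    IsMeagre ((fun u n => u (σ.symm n)) ⁻¹' S \ A) := by
  let h : (ℕ → α) ≃ₜ (ℕ → α) :=
    (Homeomorph.piCongrLeft (Y := fun _ => α) σ.symm).symm
  have hpre : (fun u n => u (σ.symm n)) ⁻¹' S \ A = h ⁻¹' (S \ A) := by
    ext u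
    exact and_congr_right' (not_congr (hA u))
  rw [hpre]
  exact hS.preimage_of_isOpenMap h.continuous h.isOpenMap

lemma dense_iUnion_preimage_cylinder {s : ℕ → ℕ} (hs : Tendsto s atTop atTop)
    (v : ℕ → α) (n : ℕ) :
    Dense (⋃ k, (fun (u : ℕ → α) i => u (s k + i)) ⁻¹' cylinder v n) := by
  intro x
  let z : ℕ → ℕ → α := fun k m => if s k ≤ m then v (m - s k) else x m
  have hz : Tendsto z atTop (𝓝 x) := by
    refine tendsto_pi_nhds.2 fun m => tendsto_const_nhds.congr' ?_
    filter_upwards [hs.eventually_gt_atTop m] with k hk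
    simp [z, not_le.2 hk]
  exact mem_closure_of_tendsto hz <|
    Eventually.of_forall fun k => mem_iUnion.2 ⟨k, fun i _ => by simp [z]⟩

variable [DiscreteTopology α]

lemma isOpen_preimage_cylinder (t : ℕ) (v : ℕ → α) (n : ℕ) :
    IsOpen ((fun (u : ℕ → α) i => u (t + i)) ⁻¹' cylinder v n) :=
  (isOpen_cylinder _ v n).preimage (continuous_pi fun _ => continuous_apply _)

lemma exists_cylinder_subset {U : Set (ℕ → α)} (hU : IsOpen U) {v : ℕ → α}
    (hv : v ∈ U) : ∃ n, cylinder v n ⊆ U := by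
  obtain ⟨_, ⟨x, n, rfl⟩, hvx, hxU⟩ :=
    (isTopologicalBasis_cylinders fun _ => α).exists_subset_of_mem_open hv hU
  exact ⟨n, (mem_cylinder_iff_eq.1 hvx).symm ▸ hxU⟩

end Sequences

section BlockSwap

def blockSwapFun (n t m : ℕ) : ℕ :=
  if m < n then m + t else if t ≤ m ∧ m < t + n then m - t else m

lemma blockSwapFun_involutive {n t : ℕ} (h : n ≤ t) :
    Function.Involutive (blockSwapFun n t) := by
  intro m
  unfold blockSwapFun
  split_ifs <;> omega

def blockSwap {n t : ℕ} (h : n ≤ t) : Equiv.Perm ℕ :=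
  (blockSwapFun_involutive h).toPerm

lemma blockSwap_symm {n t : ℕ} (h : n ≤ t) : (blockSwap h).symm = blockSwap h :=
  Function.Involutive.toPerm_symm _

lemma blockSwap_apply_of_lt {n t : ℕ} (h : n ≤ t) {i : ℕ} (hi : i < n) :
    blockSwap h i = t + i := by
  simp [blockSwap, blockSwapFun, hi, add_comm]

lemma finite_blockSwap_ne {n t : ℕ} (h : n ≤ t) : {m | blockSwap h m ≠ m}.Finite := by
  refine (finite_lt_nat (t + n)).subset fun m hm => ?_
  by_contra hmt
  simp only [mem_ofPred_eq, not_lt, blockSwap, Function.Involutive.coe_toPerm, blockSwapFun]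
    at hm hmt
  exact hm (by split_ifs <;> omega)

lemma preimage_cylinder_subset_blockSwap {α : Type*} {n t : ℕ} (h : n ≤ t) (v : ℕ → α) :
    (fun (u : ℕ → α) i => u (t + i)) ⁻¹' cylinder v n ⊆
      (fun (u : ℕ → α) i => u ((blockSwap h).symm i)) ⁻¹' cylinder v n := by
  intro u hu i hi
  simpa [blockSwap_symm, blockSwap_apply_of_lt h hi] using hu i hi

end BlockSwap

/-- Every subset of Cantor space with the Baire property that is invariant under all
finitely supported permutations of `ω` is meager or comeager. -/
theorem stmt_13 (A : Set (ℕ → Bool)) (hA : BaireMeasurableSet A)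
    (hinv : ∀ σ : Equiv.Perm ℕ, {n : ℕ | σ n ≠ n}.Finite →
      ∀ u : ℕ → Bool, u ∈ A ↔ (fun n => u (σ.symm n)) ∈ A) :
    IsMeagre A ∨ IsMeagre Aᶜ := by
  obtain ⟨U, hUo, hAU⟩ := hA.residualEq_isOpen
  rcases U.eq_empty_or_nonempty with rfl | ⟨v, hv⟩
  · exact Or.inl (sdiff_empty (s := A) ▸ isMeagre_diff_iff.2 hAU.le)
  obtain ⟨n, hn⟩ := exists_cylinder_subset hUo hv
  have hcyl : IsMeagre (cylinder v n \ A) :=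
    (isMeagre_diff_iff.2 hAU.symm.le).mono (sdiff_subset_sdiff_left hn)
  have hshift (k : ℕ) : IsMeagre ((fun u i => u (k + n + i)) ⁻¹' cylinder v n \ A) := by
    have h : n ≤ k + n := Nat.le_add_left n k
    exact (isMeagre_preimage_perm_diff _ (hinv _ (finite_blockSwap_ne h)) hcyl).mono
      (sdiff_subset_sdiff_left (preimage_cylinder_subset_blockSwap h v))
  refine Or.inr (isMeagre_compl_of_forall_isMeagre_diff ?_
    (dense_iUnion_preimage_cylinder (tendsto_add_atTop_nat n) v n) hshift)
  exact isOpen_iUnion fun k => isOpen_preimage_cylinder _ v n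
end

section
/- Let E be a meager equivalence relation on a nonempty perfect Polish space P (meager as a subset of P × P). Then there exists a nonempty perfect compact subset K ⊆ P (homeomorphic to the Cantor set) such that no two distinct elements of K are E-equivalent. -/
/-!
Fix a decreasing sequence of dense open sets `D n ⊆ P × P` whose intersection avoids `E`.
Build a binary tree of nonempty open sets, the `n`-th level consisting of sets of diameter at
most `1 / n`, each child having its closure inside its parent, and with `U × U' ⊆ D n` for any
two distinct sets `U`, `U'` of level `n + 1`; this is possible at each level because finitely
many pairs are involved and a dense open set meets every open box. The branches of the tree
converge, giving a continuous map from the Cantor space whose values at distinct points are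
`E`-inequivalent. Reflexivity of `E` makes it injective, so its range is a perfect compact set.
-/

open Set Filter Function CantorScheme
open scoped ENNReal

instance Pi.perfectSpace_of_infinite {ι : Type*} [Infinite ι] {Y : ι → Type*}
    [∀ i, TopologicalSpace (Y i)] [∀ i, Nontrivial (Y i)] : PerfectSpace (∀ i, Y i) := by
  classical
  refine ⟨preperfect_iff_nhds.2 fun a _ U hU => ?_⟩
  choose y hy using fun i => exists_ne (a i)
  obtain ⟨I, hI⟩ := exists_finset_piecewise_mem_of_mem_nhds hU y
  obtain ⟨j, hj⟩ := I.exists_notMem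
  refine ⟨I.piecewise a y, ⟨hI, mem_univ _⟩, fun h => hy j ?_⟩
  simpa [Finset.piecewise_eq_of_notMem _ _ _ hj] using congr_fun h j

theorem preperfect_range_of_injective {X Y : Type*} [TopologicalSpace X] [PerfectSpace X]
    [TopologicalSpace Y] {f : X → Y} (hf : Continuous f) (hinj : Injective f) :
    Preperfect (range f) := by
  rw [preperfect_iff_nhds]
  rintro _ ⟨a, rfl⟩ U hU
  obtain ⟨b, ⟨hbU, -⟩, hba⟩ := preperfect_iff_nhds.1 PerfectSpace.univ_preperfect a (mem_univ a)
    (f ⁻¹' U) (hf.continuousAt.preimage_mem_nhds hU)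
  exact ⟨f b, ⟨hbU, mem_range_self b⟩, hinj.ne hba⟩

theorem exists_antitone_isOpen_dense_of_mem_residual {X : Type*} [TopologicalSpace X]
    {s : Set X} (hs : s ∈ residual X) :
    ∃ O : ℕ → Set X, (∀ n, IsOpen (O n)) ∧ (∀ n, Dense (O n)) ∧ Antitone O ∧ ⋂ n, O n ⊆ s := by
  obtain ⟨S, hSo, hSd, hSc, hSs⟩ := mem_residual_iff.1 hs
  obtain ⟨f, hf⟩ := (hSc.insert univ).exists_eq_range (insert_nonempty _ _)
  have hf_open_dense : ∀ t ∈ range f, IsOpen t ∧ Dense t := by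
    rw [← hf]
    rintro t (rfl | ht)
    exacts [⟨isOpen_univ, dense_univ⟩, ⟨hSo t ht, hSd t ht⟩]
  have hfin : ∀ n, (f '' Iic n).Finite := fun n => (finite_Iic n).image f
  have himage : ∀ n, f '' Iic n ⊆ range f := fun n => image_subset_range f _
  refine ⟨fun n => ⋂₀ (f '' Iic n),
    fun n => (hfin n).isOpen_sInter fun t ht => (hf_open_dense t (himage n ht)).1,
    fun n => (hfin n).dense_sInter (fun t ht => (hf_open_dense t (himage n ht)).1)
      fun t ht => (hf_open_dense t (himage n ht)).2,
    fun m n hmn => sInter_subset_sInter (image_mono (Iic_subset_Iic.2 hmn)), ?_⟩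
  refine fun x hx => hSs fun t ht => ?_
  obtain ⟨n, rfl⟩ : t ∈ range f := hf ▸ mem_insert_of_mem _ ht
  exact mem_iInter.1 hx n _ (mem_image_of_mem f (mem_Iic.2 le_rfl))

theorem exists_isOpen_prod_subset_of_dense {X Y : Type*} [TopologicalSpace X] [TopologicalSpace Y]
    {O : Set (X × Y)} (hO : IsOpen O) (hd : Dense O) {U : Set X} {V : Set Y}
    (hU : IsOpen U) (hV : IsOpen V) (hUne : U.Nonempty) (hVne : V.Nonempty) :
    ∃ U' ⊆ U, ∃ V' ⊆ V, IsOpen U' ∧ U'.Nonempty ∧ IsOpen V' ∧ V'.Nonempty ∧ U' ×ˢ V' ⊆ O := by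
  obtain ⟨⟨x, y⟩, ⟨hx, hy⟩, hxyO⟩ := hd.inter_open_nonempty _ (hU.prod hV) (hUne.prod hVne)
  obtain ⟨u, v, hu, hv, hxu, hyv, huv⟩ := isOpen_prod_iff.1 hO x y hxyO
  exact ⟨u ∩ U, inter_subset_right, v ∩ V, inter_subset_right, hu.inter hU, ⟨x, hxu, hx⟩,
    hv.inter hV, ⟨y, hyv, hy⟩, (prod_mono inter_subset_left inter_subset_left).trans huv⟩

theorem exists_isOpen_closure_subset_ediam_le {X : Type*} [PseudoEMetricSpace X] {U : Set X}
    (hU : IsOpen U) (hUne : U.Nonempty) {ε : ℝ≥0∞} (hε : 0 < ε) :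
    ∃ V, IsOpen V ∧ V.Nonempty ∧ closure V ⊆ U ∧ Metric.ediam V ≤ ε := by
  obtain ⟨x, hx⟩ := hUne
  have hε2 : 0 < ε / 2 := ENNReal.half_pos hε.ne'
  obtain ⟨δ, hδ, hδU⟩ := Metric.nhds_basis_closedEBall.mem_iff.1
    (inter_mem (hU.mem_nhds hx) (Metric.eball_mem_nhds x hε2))
  refine ⟨Metric.eball x δ, Metric.isOpen_eball, ⟨x, Metric.mem_eball_self hδ⟩,
    (closure_minimal Metric.eball_subset_closedEBall Metric.isClosed_closedEBall).trans
      (hδU.trans inter_subset_left), ?_⟩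
  calc Metric.ediam (Metric.eball x δ) ≤ Metric.ediam (Metric.eball x (ε / 2)) :=
        Metric.ediam_mono ((Metric.eball_subset_closedEBall).trans (hδU.trans inter_subset_right))
    _ ≤ 2 * (ε / 2) := Metric.ediam_eball_le
    _ = ε := ENNReal.mul_div_cancel two_ne_zero ENNReal.ofNat_ne_top

theorem exists_shrinking_forall_prod_subset {X ι : Type*} [TopologicalSpace X]
    {O : Set (X × X)} (hO : IsOpen O) (hd : Dense O) (s : Finset (ι × ι))
    {W : ι → Set X} (hW : ∀ i, IsOpen (W i) ∧ (W i).Nonempty) :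
    ∃ V : ι → Set X, (∀ i, (IsOpen (V i) ∧ (V i).Nonempty) ∧ V i ⊆ W i) ∧
      ∀ p ∈ s, p.1 ≠ p.2 → V p.1 ×ˢ V p.2 ⊆ O := by
  classical
  induction s using Finset.induction_on with
  | empty => exact ⟨W, fun i => ⟨hW i, subset_rfl⟩, by simp⟩
  | insert p s _ ih =>
    obtain ⟨V, hV, hVs⟩ := ih
    by_cases hp : p.1 = p.2
    · refine ⟨V, hV, fun q hq hne => ?_⟩
      rcases Finset.mem_insert.1 hq with rfl | hq
      exacts [(hne hp).elim, hVs q hq hne]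
    obtain ⟨A, hA, B, hB, hAo, hAne, hBo, hBne, hAB⟩ := exists_isOpen_prod_subset_of_dense hO hd
      (hV p.1).1.1 (hV p.2).1.1 (hV p.1).1.2 (hV p.2).1.2
    let V' := update (update V p.1 A) p.2 B
    have hV' : ∀ i, (IsOpen (V' i) ∧ (V' i).Nonempty) ∧ V' i ⊆ V i := by
      intro i
      simp only [V', update_apply]
      split_ifs with h₂ h₁
      · subst h₂; exact ⟨⟨hBo, hBne⟩, hB⟩
      · subst h₁; exact ⟨⟨hAo, hAne⟩, hA⟩
      · exact ⟨(hV i).1, subset_rfl⟩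
    refine ⟨V', fun i => ⟨(hV' i).1, (hV' i).2.trans (hV i).2⟩, fun q hq hne => ?_⟩
    rcases Finset.mem_insert.1 hq with rfl | hq
    · simpa [V', update_of_ne hne] using hAB
    · exact (prod_mono (hV' _).2 (hV' _).2).trans (hVs q hq hne)

theorem exists_refinement_forall_prod_subset {X β : Type*} [PseudoEMetricSpace X] [Finite β]
    {O : Set (X × X)} (hO : IsOpen O) (hd : Dense O) (n : ℕ) {ε : ℝ≥0∞} (hε : 0 < ε)
    {W : List β → Set X} (hW : ∀ l, IsOpen (W l) ∧ (W l).Nonempty) :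
    ∃ V : List β → Set X, (∀ l, IsOpen (V l) ∧ (V l).Nonempty) ∧
      (∀ l a, closure (V (a :: l)) ⊆ W l) ∧ (∀ l, Metric.ediam (V l) ≤ ε) ∧
      ∀ l l', l.length = n → l'.length = n → l ≠ l' → V l ×ˢ V l' ⊆ O := by
  choose V₀ hV₀o hV₀ne hV₀W hV₀ε using fun l : List β =>
    exists_isOpen_closure_subset_ediam_le (hW l.tail).1 (hW l.tail).2 hε
  have hfin := List.finite_length_eq β n
  obtain ⟨V, hV, hVO⟩ := exists_shrinking_forall_prod_subset hO hd
    (hfin.toFinset ×ˢ hfin.toFinset) fun l => ⟨hV₀o l, hV₀ne l⟩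
  refine ⟨V, fun l => (hV l).1, fun l a => (closure_mono (hV _).2).trans (hV₀W _),
    fun l => (Metric.ediam_mono (hV l).2).trans (hV₀ε l),
    fun l l' hl hl' hne => hVO (l, l') (by simp [hl, hl']) hne⟩

theorem exists_scheme_forall_prod_subset {X β : Type*} [PseudoEMetricSpace X] [Nonempty X]
    [Finite β] {D : ℕ → Set (X × X)} (hDo : ∀ n, IsOpen (D n)) (hDd : ∀ n, Dense (D n)) :
    ∃ U : ℕ → List β → Set X, (∀ n l, IsOpen (U n l) ∧ (U n l).Nonempty) ∧
      (∀ n l a, closure (U (n + 1) (a :: l)) ⊆ U n l) ∧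
      (∀ n l, Metric.ediam (U n l) ≤ (n : ℝ≥0∞)⁻¹) ∧ -- no constraint at level 0: `0⁻¹ = ⊤`
      ∀ n l l', l.length = n + 1 → l'.length = n + 1 → l ≠ l' →
        U (n + 1) l ×ˢ U (n + 1) l' ⊆ D n := by
  let Level := {W : List β → Set X // ∀ l, IsOpen (W l) ∧ (W l).Nonempty}
  choose next hnext using fun n (W : Level) => exists_refinement_forall_prod_subset (hDo n)
    (hDd n) (n + 1) (ENNReal.inv_pos.2 (ENNReal.natCast_ne_top (n + 1))) W.2
  let U : ℕ → Level := fun n => Nat.rec ⟨fun _ => univ, fun _ => ⟨isOpen_univ, univ_nonempty⟩⟩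
    (fun n W => ⟨next n W, (hnext n W).1⟩) n
  refine ⟨fun n => (U n).1, fun n => (U n).2, fun n => (hnext n (U n)).2.1, ?_,
    fun n => (hnext n (U n)).2.2.2⟩
  rintro (_ | n) l
  · simp
  · exact_mod_cast (hnext n (U n)).2.2.1 l

theorem exists_continuous_forall_ne_mem_of_mem_residual {X : Type*} [MetricSpace X]
    [CompleteSpace X] [Nonempty X] {R : Set (X × X)} (hR : R ∈ residual (X × X)) :
    ∃ f : (ℕ → Bool) → X, Continuous f ∧ ∀ a b, a ≠ b → (f a, f b) ∈ R := by
  obtain ⟨D, hDo, hDd, hDanti, hDR⟩ := exists_antitone_isOpen_dense_of_mem_residual hR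
  obtain ⟨U, hU, hUsub, hUdiam, hUD⟩ := exists_scheme_forall_prod_subset (β := Bool) hDo hDd
  let A : List Bool → Set X := fun l => closure (U l.length l)
  have hA : ClosureAntitone A := Antitone.closureAntitone
    (fun l a => (hUsub l.length l a).trans subset_closure) fun _ => isClosed_closure
  have hdiam : VanishingDiam A := fun x => by
    refine tendsto_of_tendsto_of_tendsto_of_le_of_le tendsto_const_nhds
      ENNReal.tendsto_inv_nat_nhds_zero (fun _ => zero_le) fun n => ?_
    simpa [A, Metric.ediam_closure] using hUdiam n (PiNat.res x n)
  have hdom : ∀ x, x ∈ (inducedMap A).1 := fun x =>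
    (hA.map_of_vanishingDiam hdiam fun l => (hU _ l).2.closure) ▸ mem_univ x
  let f x := (inducedMap A).2 ⟨x, hdom x⟩
  have hfU : ∀ x n, f x ∈ U n (PiNat.res x n) := fun x n => by
    have := map_mem ⟨x, hdom x⟩ (n + 1)
    simp only [A, PiNat.res_succ, List.length_cons, PiNat.res_length] at this
    exact hUsub n _ (x n) this
  refine ⟨f, hdiam.map_continuous.comp (by fun_prop), fun a b hab => hDR (mem_iInter.2 fun n => ?_)⟩
  obtain ⟨i, hi⟩ := Function.ne_iff.1 hab
  have hres : PiNat.res a (max n i + 1) ≠ PiNat.res b (max n i + 1) := fun h =>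
    hi (PiNat.res_eq_res.1 h (Nat.lt_succ_of_le (le_max_right n i)))
  exact hDanti (le_max_left n i) (hUD _ _ _ (PiNat.res_length _ _) (PiNat.res_length _ _) hres
    (mk_mem_prod (hfU a _) (hfU b _)))

theorem stmt_14_general {P : Type*} [TopologicalSpace P] [PolishSpace P] [Nonempty P]
    (E : P → P → Prop) (hE : Equivalence E)
    (hmeager : IsMeagre {p : P × P | E p.1 p.2}) :
    ∃ K : Set P, K.Nonempty ∧ IsCompact K ∧ Perfect K ∧
      ∀ x ∈ K, ∀ y ∈ K, x ≠ y → ¬ E x y := by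
  let := TopologicalSpace.upgradeIsCompletelyMetrizable P
  obtain ⟨f, hf, hfE⟩ := exists_continuous_forall_ne_mem_of_mem_residual hmeager
  have hinj : Injective f := fun a b hab => by_contra fun hne => hfE a b hne (hab ▸ hE.refl (f a))
  refine ⟨range f, range_nonempty f, isCompact_range hf,
    ⟨(isCompact_range hf).isClosed, preperfect_range_of_injective hf hinj⟩, ?_⟩
  rintro _ ⟨a, rfl⟩ _ ⟨b, rfl⟩ hne
  exact hfE a b (ne_of_apply_ne f hne)

/-- Kuratowski–Mycielski: a meager equivalence relation on a nonempty perfect Polish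
space admits a nonempty perfect compact set of pairwise inequivalent elements. -/
theorem stmt_14 {P : Type*} [TopologicalSpace P] [PolishSpace P] [Nonempty P]
    [PerfectSpace P] (E : P → P → Prop) (hE : Equivalence E)
    (hmeager : IsMeagre {p : P × P | E p.1 p.2}) :
    ∃ K : Set P, K.Nonempty ∧ IsCompact K ∧ Perfect K ∧
      ∀ x ∈ K, ∀ y ∈ K, x ≠ y → ¬ E x y :=
  stmt_14_general E hE hmeager
end
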